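/- arXiv:2109.07220 — 5 statements merged into one kernel-verified Lean document; each statement's English description precedes it below -/
import Mathlib

section
/- Let T > 0 and let A : ℝ → ℂ^{N×N} be a continuous, T-periodic matrix-valued function. Let X : ℝ → ℂ^{N×N} be the fundamental solution, i.e., X is differentiable with X'(t) = A(t)·X(t) for all t ∈ ℝ and X(0) = Id. Then there exist a constant matrix F ∈ ℂ^{N×N} and a T-periodic matrix-valued function P : ℝ → ℂ^{N×N} such that X(t) = P(t)·exp(tF) for all t ∈ ℝ, where exp denotes the matrix exponential. -/
/-!
Uniqueness for `Y' = A Y` and periodicity of `A` give the monodromy relation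
`X (t + T) = X t * X T`, and `X T` is invertible since `X T * a = X T * b` makes the solutions
`X t * a` and `X t * b` agree. An invertible complex matrix `M` is an exponential: in the
commutative Banach algebra generated by `M`, the Chinese remainder theorem for the factorization
of its minimal polynomial gives idempotents `e μ` summing to `1` with `e μ * (M - μ)` nilpotent,
and `log μ + log (1 + μ⁻¹ (M - μ))`, the second series being finite, is a logarithm on each
`e μ`-component. If `X T = exp L` and `F = T⁻¹ • L`, then `X t * exp (-t • F)` is `T`-periodic.
-/

open NormedSpace Polynomial

theorem Polynomial.Monic.prod_X_sub_C_pow_count_roots {K : Type*} [Field K] [IsAlgClosed K]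
    [DecidableEq K] {p : K[X]} (hp : p.Monic) :
    ∏ μ ∈ p.roots.toFinset, (X - C μ) ^ p.roots.count μ = p := by
  rw [← Finset.prod_multiset_map_count]
  exact prod_multiset_X_sub_C_of_monic_of_roots_card_eq hp
    (IsAlgClosed.splits p).natDegree_eq_card_roots.symm

theorem exists_completeOrthogonalIdempotents_isNilpotent_mul_sub {K R : Type*} [Field K]
    [IsAlgClosed K] [CommRing R] [Algebra K R] {u : R} (hu : IsIntegral K u) :
    ∃ (s : Finset K) (e : s → R), CompleteOrthogonalIdempotents e ∧
      ∀ μ : s, IsNilpotent (e μ * (u - algebraMap K R μ)) := by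
  classical
  set p := minpoly K u
  set s := p.roots.toFinset
  let q : s → K[X] := fun μ => (X - C (μ : K)) ^ p.roots.count (μ : K)
  have hq : ∏ μ, q μ = p :=
    (Finset.prod_coe_sort s _).trans (minpoly.monic hu).prod_X_sub_C_pow_count_roots
  have hq_coprime : ∀ μ ν, μ ≠ ν → IsCoprime (q μ) (q ν) := fun μ ν h =>
    (pairwise_coprime_X_sub_C Subtype.val_injective h).pow
  let I : s → Ideal K[X] := fun μ => Ideal.span {q μ}
  have hI : Pairwise (Function.onFun IsCoprime I) := fun μ ν h =>
    (Ideal.isCoprime_span_singleton_iff _ _).mpr (hq_coprime μ ν h)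
  let crt := (Ideal.quotientInfRingEquivPiQuotient I hI).symm
  have hker : ∀ a ∈ ⨅ μ, I μ, aeval u a = 0 := by
    intro a ha
    rw [Ideal.iInf_span_singleton hq_coprime, hq, Ideal.mem_span_singleton] at ha
    obtain ⟨c, rfl⟩ := ha
    rw [map_mul, minpoly.aeval, zero_mul]
  let ev : K[X] ⧸ ⨅ μ, I μ →+* R := Ideal.Quotient.lift _ (aeval u).toRingHom hker
  refine ⟨s, fun μ => ev (crt (Pi.single μ 1)),
    (CompleteOrthogonalIdempotents.single _).map (ev.comp crt.toRingHom), fun μ => ?_⟩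
  -- `e μ * (u - μ)` comes from the family supported at `μ` with value `X - μ` there
  have hcrt : crt.symm (Ideal.Quotient.mk _ (X - C (μ : K))) =
      fun ν => Ideal.Quotient.mk (I ν) (X - C (μ : K)) := rfl
  have hmul : ev (crt (Pi.single μ 1)) * (u - algebraMap K R μ) =
      ev (crt (Pi.single μ (Ideal.Quotient.mk (I μ) (X - C (μ : K))))) := by
    have : Pi.single μ (Ideal.Quotient.mk (I μ) (X - C (μ : K))) =
        Pi.single μ 1 * crt.symm (Ideal.Quotient.mk _ (X - C (μ : K))) := by
      rw [hcrt, ← Pi.single_mul_left, one_mul]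
    rw [this, map_mul, map_mul, RingEquiv.apply_symm_apply]
    simp [ev]
  rw [hmul]
  refine IsNilpotent.map (IsNilpotent.map ⟨p.roots.count (μ : K), ?_⟩ _) _
  have hm : p.roots.count (μ : K) ≠ 0 := Multiset.count_ne_zero.mpr (Multiset.mem_toFinset.mp μ.2)
  funext ν
  rw [Pi.pow_apply, Pi.zero_apply]
  rcases eq_or_ne ν μ with rfl | hνμ
  · rw [Pi.single_eq_same, ← map_pow]
    exact Ideal.Quotient.eq_zero_iff_mem.mpr (Ideal.mem_span_singleton_self _)
  · rw [Pi.single_eq_of_ne hνμ, zero_pow hm]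

section CommBanachAlgebra

variable {B : Type*} [NormedCommRing B] [NormedAlgebra ℂ B] [CompleteSpace B]

theorem exp_eq_of_hasDerivAt {l l' f : ℝ → B} (hl : ∀ t, HasDerivAt l (l' t) t)
    (hf : ∀ t, HasDerivAt f (l' t * f t) t) (hl0 : l 0 = 0) (hf0 : f 0 = 1) (t : ℝ) :
    exp (l t) = f t := by
  let _ : NormedAlgebra ℚ B := .restrictScalars ℚ ℂ B
  have hderiv : ∀ t, HasDerivAt (fun t => exp (-l t) * f t) 0 t := by
    intro t
    have hexp : HasDerivAt (fun t => exp (-l t)) (exp (-l t) * -l' t) t := by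
      simpa [Function.comp_def] using
        (hasFDerivAt_exp (𝕂 := ℝ) (x := -l t)).comp_hasDerivAt t (hl t).neg
    exact (hexp.fun_mul (hf t)).congr_deriv (by ring)
  have hconst : exp (-l t) * f t = 1 := by
    simpa [hl0, hf0] using is_const_of_deriv_eq_zero (fun t => (hderiv t).differentiableAt)
      (fun t => (hderiv t).deriv) t 0
  calc exp (l t) = exp (l t) * (exp (-l t) * f t) := by rw [hconst, mul_one]
    _ = f t := by rw [← mul_assoc, ← exp_add, add_neg_cancel, exp_zero, one_mul]

theorem IsIdempotentElem.exp_mul {e : B} (he : IsIdempotentElem e) (x : B) :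
    exp (e * x) = 1 + e * (exp x - 1) := by
  have hl : ∀ t : ℝ, HasDerivAt (fun t : ℝ => t • (e * x)) (e * x) t := fun t => by
    simpa using (hasDerivAt_id t).smul_const (e * x)
  have hf : ∀ t : ℝ, HasDerivAt (fun t : ℝ => 1 + e * (exp (t • x) - 1))
      (e * x * (1 + e * (exp (t • x) - 1))) t := fun t =>
    ((((hasDerivAt_exp_smul_const x t).sub_const 1).const_mul e).const_add 1).congr_deriv
      (by linear_combination (x - x * exp (t • x)) * he.eq)
  simpa using exp_eq_of_hasDerivAt hl hf (by simp) (by simp) 1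

theorem exists_exp_eq_one_add_of_isNilpotent {n : B} (hn : IsNilpotent n) :
    ∃ v, exp v = 1 + n := by
  obtain ⟨m, hm⟩ := hn
  -- the series of `log (1 + t • n)`, truncated where `n ^ m = 0`
  have hl : ∀ t : ℝ,
      HasDerivAt (fun t : ℝ => ∑ k ∈ Finset.range m, (t ^ (k + 1) / (k + 1)) • (n * (-n) ^ k))
        (∑ k ∈ Finset.range m, t ^ k • (n * (-n) ^ k)) t := by
    intro t
    refine HasDerivAt.fun_sum fun k _ => ?_
    refine (((hasDerivAt_pow (k + 1) t).div_const (k + 1)).smul_const _).congr_deriv ?_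
    congr 1
    field_simp
    push_cast
    ring
  have hgeom : ∀ t : ℝ, (∑ k ∈ Finset.range m, t ^ k • (n * (-n) ^ k)) * (1 + t • n) = n := by
    intro t
    have h := geom_sum_mul (t • -n) m
    rw [_root_.smul_pow, neg_pow n m, hm, mul_zero, smul_zero, zero_sub] at h
    have hsum : ∑ k ∈ Finset.range m, t ^ k • (n * (-n) ^ k) =
        n * ∑ k ∈ Finset.range m, (t • -n) ^ k := by
      simp only [Finset.mul_sum, _root_.smul_pow, mul_smul_comm]
    rw [smul_neg] at h
    rw [hsum, smul_neg]
    linear_combination (-n) * h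
  have hf : ∀ t : ℝ, HasDerivAt (fun t : ℝ => 1 + t • n)
      ((∑ k ∈ Finset.range m, t ^ k • (n * (-n) ^ k)) * (1 + t • n)) t := fun t =>
    (((hasDerivAt_id t).smul_const n).const_add 1).congr_deriv (by rw [hgeom, one_smul])
  exact ⟨_, (exp_eq_of_hasDerivAt hl hf (by simp) (by simp) 1).trans (by simp)⟩

theorem IsIdempotentElem.mul_exp_mul {e : B} (he : IsIdempotentElem e) (x : B) :
    e * exp (e * x) = e * exp x := by
  rw [he.exp_mul]
  linear_combination (exp x - 1) * he.eq

theorem IsIdempotentElem.exists_mul_exp_eq_mul {e u : B} {μ : ℂ} (he : IsIdempotentElem e)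
    (hu : IsUnit u) (hn : IsNilpotent (e * (u - algebraMap ℂ B μ))) :
    ∃ y, e * exp y = e * u := by
  let _ : NormedAlgebra ℚ B := .restrictScalars ℚ ℂ B
  rcases eq_or_ne μ 0 with rfl | hμ
  · have he0 : e = 0 := by
      rw [map_zero, sub_zero, hu.isNilpotent_mul_unit_of_commute_iff (.all e u)] at hn
      obtain ⟨k, hk⟩ := hn
      rw [← he.pow_succ_eq k, pow_succ, hk, zero_mul]
    exact ⟨0, by rw [he0, zero_mul, zero_mul]⟩
  obtain ⟨v, hv⟩ := exists_exp_eq_one_add_of_isNilpotent (hn.smul μ⁻¹)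
  refine ⟨algebraMap ℂ B (Complex.log μ) + v, ?_⟩
  rw [exp_add, ← algebraMap_exp_comm, ← Complex.exp_eq_exp_ℂ, Complex.exp_log hμ, hv,
    mul_add, mul_one, Algebra.mul_smul_comm, ← Algebra.smul_def, smul_smul, inv_mul_cancel₀ hμ,
    one_smul]
  linear_combination (u - algebraMap ℂ B μ) * he.eq

theorem exists_exp_eq_of_isUnit_of_isIntegral {u : B} (hu : IsUnit u) (hint : IsIntegral ℂ u) :
    ∃ v, exp v = u := by
  classical
  obtain ⟨s, e, he, hnil⟩ := exists_completeOrthogonalIdempotents_isNilpotent_mul_sub hint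
  choose y hy using fun μ => (he.idem μ).exists_mul_exp_eq_mul hu (hnil μ)
  refine ⟨∑ μ, e μ * y μ, ?_⟩
  have hcomponent : ∀ μ, e μ * exp (∑ ν, e ν * y ν) = e μ * u := by
    intro μ
    have : e μ * ∑ ν, e ν * y ν = e μ * y μ := by
      simp [Finset.mul_sum, ← mul_assoc, he.mul_eq]
    rw [← (he.idem μ).mul_exp_mul, this, (he.idem μ).mul_exp_mul, hy]
  calc exp (∑ ν, e ν * y ν) = ∑ μ, e μ * exp (∑ ν, e ν * y ν) := by
        rw [← Finset.sum_mul, he.complete, one_mul]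
    _ = ∑ μ, e μ * u := Finset.sum_congr rfl fun μ _ => hcomponent μ
    _ = u := by rw [← Finset.sum_mul, he.complete, one_mul]

end CommBanachAlgebra

theorem Matrix.isUnit_of_isLeftRegular {n K : Type*} [Fintype n] [DecidableEq n] [Field K]
    {M : Matrix n n K} (h : IsLeftRegular M) : IsUnit M :=
  (M.isUnit_iff_isUnit_det).mpr (Matrix.nonsingular_iff_det_ne_zero.mp (.of_leftRegular h)).isUnit

theorem Matrix.exists_exp_eq_of_isUnit {n : Type*} [Fintype n] [DecidableEq n]
    {M : Matrix n n ℂ} (hM : IsUnit M) : ∃ L, exp L = M := by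
  let _ : NormedRing (Matrix n n ℂ) := Matrix.linftyOpNormedRing
  let _ : NormedAlgebra ℂ (Matrix n n ℂ) := Matrix.linftyOpNormedAlgebra
  let E := Algebra.elemental ℂ M
  let _ : NormedCommRing E := { (inferInstance : NormedRing E) with mul_comm := mul_comm }
  let b : E := ⟨M, Algebra.elemental.self_mem ℂ M⟩
  have hint : IsIntegral ℂ b :=
    (isIntegral_algHom_iff E.val Subtype.val_injective).mp (Algebra.IsIntegral.isIntegral M)
  have hunit : IsUnit b := IsArtinianRing.isUnit_of_isIntegral_of_nonZeroDivisor hint <|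
    comap_nonZeroDivisors_le_of_injective (f := E.val) Subtype.val_injective hM.mem_nonZeroDivisors
  obtain ⟨v, hv⟩ := exists_exp_eq_of_isUnit_of_isIntegral hunit hint
  let _ : NormedAlgebra ℚ E := .restrictScalars ℚ ℂ E
  exact ⟨v, (map_exp E.val continuous_subtype_val v).symm.trans (congrArg E.val hv)⟩

section LinearODE

variable {E : Type*} [NormedRing E] [NormedAlgebra ℝ E] {A : ℝ → E} {C : ℝ}

theorem linear_ODE_solution_unique (hA : ∀ t, ‖A t‖ ≤ C) {f g : ℝ → E}
    (hf : ∀ t, HasDerivAt f (A t * f t) t) (hg : ∀ t, HasDerivAt g (A t * g t) t) {t₀ : ℝ}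
    (h : f t₀ = g t₀) : f = g := by
  have hlip : ∀ t, LipschitzWith C.toNNReal (A t * ·) := fun t =>
    LipschitzWith.of_dist_le_mul fun y y' => by
      rw [dist_eq_norm, dist_eq_norm, ← mul_sub]
      exact (norm_mul_le _ _).trans
        (mul_le_mul_of_nonneg_right ((hA t).trans (Real.le_coe_toNNReal C)) (norm_nonneg _))
  exact ODE_solution_unique_univ (s := fun _ => Set.univ) (fun t => (hlip t).lipschitzOnWith)
    (fun t => ⟨hf t, trivial⟩) (fun t => ⟨hg t, trivial⟩) h

theorem eq_mul_apply_zero_of_hasDerivAt (hA : ∀ t, ‖A t‖ ≤ C) {X : ℝ → E}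
    (hX : ∀ t, HasDerivAt X (A t * X t) t) (hX0 : X 0 = 1) {Y : ℝ → E}
    (hY : ∀ t, HasDerivAt Y (A t * Y t) t) (t : ℝ) : Y t = X t * Y 0 := by
  refine congrFun (linear_ODE_solution_unique hA hY (g := (X · * Y 0)) (t₀ := 0) (fun t => ?_)
    (by rw [hX0, one_mul])) t
  exact ((hX t).mul_const (Y 0)).congr_deriv (mul_assoc _ _ _)

theorem isLeftRegular_of_hasDerivAt (hA : ∀ t, ‖A t‖ ≤ C) {X : ℝ → E}
    (hX : ∀ t, HasDerivAt X (A t * X t) t) (hX0 : X 0 = 1) (t₀ : ℝ) : IsLeftRegular (X t₀) := by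
  intro a b hab
  have hsol : ∀ c, ∀ t, HasDerivAt (X · * c) (A t * (X t * c)) t := fun c t =>
    ((hX t).mul_const c).congr_deriv (mul_assoc _ _ _)
  simpa [hX0] using congrFun (linear_ODE_solution_unique hA (hsol a) (hsol b) hab) 0

end LinearODE

theorem exists_periodic_mul_exp_smul {E : Type*} [NormedRing E] [NormedAlgebra ℝ E]
    [CompleteSpace E] {X : ℝ → E} {T : ℝ} (hT : T ≠ 0) {L : E}
    (hX : ∀ t, X (t + T) = X t * exp L) :
    ∃ (F : E) (P : ℝ → E), (∀ t, P (t + T) = P t) ∧ ∀ t, X t = P t * exp (t • F) := by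
  let _ : NormedAlgebra ℚ E := .restrictScalars ℚ ℝ E
  set F := T⁻¹ • L
  have hexp_add : ∀ s t : ℝ, exp ((s + t) • F) = exp (s • F) * exp (t • F) := fun s t => by
    rw [add_smul, exp_add_of_commute (((Commute.refl F).smul_left s).smul_right t)]
  have hexp_cancel : ∀ s t : ℝ, s + t = 0 → exp (s • F) * exp (t • F) = 1 := fun s t h => by
    rw [← hexp_add, h, zero_smul, exp_zero]
  have hL : exp L = exp (T • F) := by rw [smul_inv_smul₀ hT]
  refine ⟨F, fun t => X t * exp ((-t) • F), fun t => ?_, fun t => ?_⟩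
  · dsimp only
    rw [hX, neg_add_rev, hexp_add, hL, mul_assoc, ← mul_assoc (exp (T • F)),
      hexp_cancel T (-T) (add_neg_cancel T), one_mul]
  · rw [mul_assoc, hexp_cancel _ _ (neg_add_cancel t), mul_one]

/-- **Floquet's theorem.** Let `T > 0` and let `A : ℝ → ℂ^{N×N}` be a continuous,
`T`-periodic matrix-valued function. Let `X` be the fundamental solution, i.e.,
`X'(t) = A(t) * X(t)` (entrywise derivatives) and `X 0 = 1`. Then there is a constant
matrix `F` and a `T`-periodic matrix function `P` with `X t = P t * exp (t • F)`. -/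
theorem floquet_theorem {N : ℕ}
    (T : ℝ) (hT : 0 < T)
    (A X : ℝ → Matrix (Fin N) (Fin N) ℂ)
    (hA_cont : Continuous A)
    (hA_per : ∀ t : ℝ, A (t + T) = A t)
    (hX_deriv : ∀ (i j : Fin N) (t : ℝ),
      HasDerivAt (fun s => X s i j) ((A t * X t) i j) t)
    (hX0 : X 0 = 1) :
    ∃ (F : Matrix (Fin N) (Fin N) ℂ) (P : ℝ → Matrix (Fin N) (Fin N) ℂ),
      (∀ t : ℝ, P (t + T) = P t) ∧
      (∀ t : ℝ, X t = P t * NormedSpace.exp (t • F)) := by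
  -- any submultiplicative norm will do: `HasDerivAt` and `exp` only depend on the topology
  let _ : NormedRing (Matrix (Fin N) (Fin N) ℂ) := Matrix.linftyOpNormedRing
  let _ : NormedAlgebra ℝ (Matrix (Fin N) (Fin N) ℂ) := Matrix.linftyOpNormedAlgebra
  have hX : ∀ t, HasDerivAt X (A t * X t) t := fun t =>
    hasDerivAt_pi.mpr fun i => hasDerivAt_pi.mpr fun j => hX_deriv i j t
  obtain ⟨C, hC⟩ := isBounded_iff_forall_norm_le.mp
    (Function.Periodic.isBounded_of_continuous hA_per hT.ne' hA_cont)
  have hA : ∀ t, ‖A t‖ ≤ C := fun t => hC _ ⟨t, rfl⟩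
  have hmonodromy : ∀ t, X (t + T) = X t * X T := fun t => by
    simpa using eq_mul_apply_zero_of_hasDerivAt hA hX hX0
      (fun t => ((hX (t + T)).comp_add_const t T).congr_deriv (by rw [hA_per])) t
  obtain ⟨L, hL⟩ := Matrix.exists_exp_eq_of_isUnit
    (Matrix.isUnit_of_isLeftRegular (isLeftRegular_of_hasDerivAt hA hX hX0 T))
  exact exists_periodic_mul_exp_smul hT.ne' (hL ▸ hmonodromy)
end

section
/- Let T > 0 and let A : ℝ → ℂ^{N×N} be a continuous, T-periodic matrix-valued function. Let X : ℝ → ℂ^{N×N} be the fundamental solution, i.e., X is differentiable with X'(t) = A(t)·X(t) for all t ∈ ℝ and X(0) = Id. Then X(t+T) = X(t)·X(T) for all t ∈ ℝ. -/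
open Set

attribute [local instance] Matrix.seminormedAddCommGroup Matrix.normedAddCommGroup Matrix.normedSpace

private lemma matrix_mul_norm_le {N : ℕ} (M B : Matrix (Fin N) (Fin N) ℂ) :
    ‖M * B‖ ≤ (N : ℝ) * ‖M‖ * ‖B‖ := by
  have hr : (0:ℝ) ≤ (N : ℝ) * ‖M‖ * ‖B‖ := by positivity
  rw [Matrix.norm_le_iff hr]
  intro i j
  calc ‖(M * B) i j‖ = ‖∑ k, M i k * B k j‖ := by rw [Matrix.mul_apply]
    _ ≤ ∑ k, ‖M i k * B k j‖ := norm_sum_le _ _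
    _ ≤ ∑ _k : Fin N, ‖M‖ * ‖B‖ := by
        refine Finset.sum_le_sum fun k _ => ?_
        rw [norm_mul]
        exact mul_le_mul (Matrix.norm_entry_le_entrywise_sup_norm M)
          (Matrix.norm_entry_le_entrywise_sup_norm B) (norm_nonneg _) (norm_nonneg _)
    _ = (N : ℝ) * ‖M‖ * ‖B‖ := by
        rw [Finset.sum_const, Finset.card_univ, Fintype.card_fin, nsmul_eq_mul, mul_assoc]

/-- For the fundamental solution `X` of the `T`-periodic linear system `X' = A(t) X`,
`X(0) = Id`, one has `X (t + T) = X t * X T` for all `t`. -/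
theorem fundamental_solution_periodicity {N : ℕ}
    (T : ℝ) (hT : 0 < T)
    (A X : ℝ → Matrix (Fin N) (Fin N) ℂ)
    (hA_cont : Continuous A)
    (hA_per : ∀ t : ℝ, A (t + T) = A t)
    (hX_deriv : ∀ (i j : Fin N) (t : ℝ),
      HasDerivAt (fun s => X s i j) ((A t * X t) i j) t)
    (hX0 : X 0 = 1) :
    ∀ t : ℝ, X (t + T) = X t * X T := by
  intro t
  set a : ℝ := -(|t| + 1) with ha_def
  set b : ℝ := |t| + 1 with hb_def
  have hb1 : (0:ℝ) < b := by
    simp only [hb_def]; positivity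
  have ht0 : (0:ℝ) ∈ Ioo a b := ⟨by simp only [ha_def]; linarith, hb1⟩
  have htmem : t ∈ Icc a b := by
    constructor
    · simp only [ha_def, neg_le]
      calc -t ≤ |t| := neg_le_abs t
        _ ≤ |t| + 1 := by linarith
    · calc t ≤ |t| := le_abs_self t
        _ ≤ |t| + 1 := by linarith
  -- clamp
  set proj : ℝ → ℝ := fun s => max a (min s b) with hproj_def
  have hproj_mem : ∀ s, proj s ∈ Icc a b := by
    intro s
    constructor
    · exact le_max_left _ _
    · simp only [hproj_def, max_le_iff]
      exact ⟨by linarith, min_le_right _ _⟩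
  have hproj_eq : ∀ s ∈ Icc a b, proj s = s := by
    intro s hs
    simp only [hproj_def]
    rw [min_eq_left hs.2, max_eq_right hs.1]
  -- bound on ‖A‖ over the compact interval
  obtain ⟨s₀, hs₀mem, hs₀⟩ := isCompact_Icc.exists_isMaxOn ⟨0, Ioo_subset_Icc_self ht0⟩
    (hA_cont.norm.continuousOn : ContinuousOn (fun s => ‖A s‖) (Icc a b))
  set C : ℝ := ‖A s₀‖ with hC_def
  have hC0 : 0 ≤ C := norm_nonneg _
  set K : NNReal := (↑N * C).toNNReal with hK_def
  set v : ℝ → Matrix (Fin N) (Fin N) ℂ → Matrix (Fin N) (Fin N) ℂ :=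
    fun s x => A (proj s) * x with hv_def
  have hv : ∀ s, LipschitzWith K (v s) := by
    intro s
    apply LipschitzWith.of_dist_le_mul
    intro x y
    rw [dist_eq_norm, dist_eq_norm, hv_def]
    have : A (proj s) * x - A (proj s) * y = A (proj s) * (x - y) := by
      rw [Matrix.mul_sub]
    rw [this]
    calc ‖A (proj s) * (x - y)‖ ≤ (N:ℝ) * ‖A (proj s)‖ * ‖x - y‖ := matrix_mul_norm_le _ _
      _ ≤ (N:ℝ) * C * ‖x - y‖ := by
          gcongr
          exact hs₀ (hproj_mem s)
      _ ≤ (K : ℝ) * ‖x - y‖ := by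
          gcongr
          rw [hK_def]
          exact (Real.le_coe_toNNReal _)
  -- full matrix derivative of X
  have hX : ∀ s, HasDerivAt X (A s * X s) s := by
    intro s
    refine hasDerivAt_pi.mpr ?_
    intro i
    rw [hasDerivAt_pi]
    intro j
    exact hX_deriv i j s
  -- the two solutions
  set u : ℝ → Matrix (Fin N) (Fin N) ℂ := fun s => X (s + T) with hu_def
  set w : ℝ → Matrix (Fin N) (Fin N) ℂ := fun s => X s * X T with hw_def
  have hu : ∀ s, HasDerivAt u (A s * u s) s := by
    intro s
    have h1 : HasDerivAt (fun r : ℝ => r + T) 1 s := (hasDerivAt_id s).add_const T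
    have := HasDerivAt.scomp s (hX (s + T)) h1
    simp only [Function.comp_def, one_smul, hA_per] at this
    exact this
  have hw : ∀ s, HasDerivAt w (A s * w s) s := by
    intro s
    refine hasDerivAt_pi.mpr ?_
    intro i
    rw [hasDerivAt_pi]
    intro j
    have : HasDerivAt (fun r => ∑ k, X r i k * X T k j)
        (∑ k, (A s * X s) i k * X T k j) s :=
      HasDerivAt.fun_sum fun k _ => by
        have := hasDerivAt_pi.mpr fun j => hX_deriv i j s
        exact (hX_deriv i k s).mul_const (X T k j)
    have heq : (fun r => w r i j) = fun r => ∑ k, X r i k * X T k j := by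
      funext r
      simp [hw_def, Matrix.mul_apply]
    have heq2 : (A s * w s) i j = ∑ k, (A s * X s) i k * X T k j := by
      have hassoc : A s * (X s * X T) = (A s * X s) * X T := (Matrix.mul_assoc _ _ _).symm
      show (A s * (X s * X T)) i j = _
      rw [hassoc, Matrix.mul_apply]
    rw [heq, heq2]
    exact this
  have huniq := ODE_solution_unique_of_mem_Icc (s := fun _ => (univ : Set (Matrix (Fin N) (Fin N) ℂ)))
    (fun s _ => (hv s).lipschitzOnWith) ht0
    (fun s _ => (hu s).continuousAt.continuousWithinAt)
    (fun s hs => by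
      have h := hu s; simp only [hv_def, hproj_eq s (Ioo_subset_Icc_self hs)]; exact h)
    (fun _ _ => mem_univ _)
    (fun s _ => (hw s).continuousAt.continuousWithinAt)
    (fun s hs => by
      have h := hw s; simp only [hv_def, hproj_eq s (Ioo_subset_Icc_self hs)]; exact h)
    (fun _ _ => mem_univ _)
    (by simp [hu_def, hw_def, hX0])
  exact huniq htmem
end

section
/- Let T > 0, k ∈ ℝ, let C ∈ ℂ^{2×2} be a Hermitian matrix, and let W₁, W₂, W₃ : ℝ → ℂ^{2×2} be T-periodic, continuous, diagonal matrix-valued functions. Define M(t) := k·W₁(t)·C·W₂(t) + W₃(t) and N(t) := k·W₁(t)·Cᵀ·W₂(t) + W₃(t). Then for every ν ∈ ℂ, ν is a quasifrequency of the system φ''(t) + M(t)φ(t) = 0 if and only if ν is a quasifrequency of the system φ''(t) + N(t)φ(t) = 0. (Since for a two-resonator unit cell the capacitance matrices satisfy C^{−α} = (C^α)ᵀ with C^α Hermitian, this says that reciprocity is always preserved when the unit cell contains at most two time-modulated subwavelength resonators.) -/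
open Matrix

/-- `ν` is a quasifrequency of the Hill system `φ'' + M(t)φ = 0` if there is a twice
differentiable, not identically zero solution `φ` with `φ(t+T) = e^{iνT}φ(t)`. -/
def IsQuasifrequency {n : ℕ} (T : ℝ) (M : ℝ → Matrix (Fin n) (Fin n) ℂ) (ν : ℂ) : Prop :=
  ∃ φ φ' : ℝ → Fin n → ℂ,
    (∀ (i : Fin n) (t : ℝ), HasDerivAt (fun s => φ s i) (φ' t i) t) ∧
    (∀ (i : Fin n) (t : ℝ), HasDerivAt (fun s => φ' s i) (-(M t *ᵥ φ t) i) t) ∧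
    (¬ ∀ t : ℝ, φ t = 0) ∧
    (∀ t : ℝ, φ (t + T) = Complex.exp (Complex.I * ν * T) • φ t)

lemma diag_mul_apply {n : ℕ} {W X : Matrix (Fin n) (Fin n) ℂ} (hW : W.IsDiag) (i j : Fin n) :
    (W * X) i j = W i i * X i j := by
  rw [Matrix.mul_apply]
  refine Finset.sum_eq_single i (fun l _ hl => ?_) (by simp)
  rw [hW (Ne.symm hl), zero_mul]

lemma mul_diag_apply {n : ℕ} {X W : Matrix (Fin n) (Fin n) ℂ} (hW : W.IsDiag) (i j : Fin n) :
    (X * W) i j = X i j * W j j := by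
  rw [Matrix.mul_apply]
  refine Finset.sum_eq_single j (fun l _ hl => ?_) (by simp)
  rw [hW hl, mul_zero]

/-- Transfer of quasifrequencies via a constant invertible diagonal gauge `d` that
intertwines `C` and `Cᵀ`. -/
lemma quasi_transfer {n : ℕ} (T : ℝ) (k : ℝ) (C : Matrix (Fin n) (Fin n) ℂ)
    (W₁ W₂ W₃ : ℝ → Matrix (Fin n) (Fin n) ℂ)
    (hW₁_diag : ∀ t : ℝ, (W₁ t).IsDiag)
    (hW₂_diag : ∀ t : ℝ, (W₂ t).IsDiag)
    (hW₃_diag : ∀ t : ℝ, (W₃ t).IsDiag)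
    (d : Fin n → ℂ) (hd : ∀ i, d i ≠ 0)
    (hCd : ∀ i j, C j i * d j = d i * C i j) (ν : ℂ)
    (h : IsQuasifrequency T (fun t => (k : ℂ) • (W₁ t * C * W₂ t) + W₃ t) ν) :
    IsQuasifrequency T (fun t => (k : ℂ) • (W₁ t * Cᵀ * W₂ t) + W₃ t) ν := by
  obtain ⟨φ, φ', hφ, hφ', hne, hper⟩ := h
  -- key entrywise intertwining identity
  have key : ∀ (t : ℝ) (i j : Fin n),
      ((k : ℂ) • (W₁ t * Cᵀ * W₂ t) + W₃ t) i j * d j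
        = d i * (((k : ℂ) • (W₁ t * C * W₂ t) + W₃ t) i j) := by
    intro t i j
    have h1 : (W₁ t * Cᵀ * W₂ t) i j = W₁ t i i * C j i * W₂ t j j := by
      rw [mul_diag_apply (hW₂_diag t), diag_mul_apply (hW₁_diag t), Matrix.transpose_apply]
    have h2 : (W₁ t * C * W₂ t) i j = W₁ t i i * C i j * W₂ t j j := by
      rw [mul_diag_apply (hW₂_diag t), diag_mul_apply (hW₁_diag t)]
    simp only [Matrix.add_apply, Matrix.smul_apply, smul_eq_mul, h1, h2]
    by_cases hij : i = j
    · subst hij; ring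
    · rw [hW₃_diag t hij]
      have := hCd i j
      ring_nf
      linear_combination (k : ℂ) * W₁ t i i * W₂ t j j * this
  have keyVec : ∀ (t : ℝ) (i : Fin n),
      (((k : ℂ) • (W₁ t * Cᵀ * W₂ t) + W₃ t) *ᵥ (fun j => d j * φ t j)) i
        = d i * ((((k : ℂ) • (W₁ t * C * W₂ t) + W₃ t)) *ᵥ φ t) i := by
    intro t i
    simp only [Matrix.mulVec, dotProduct, Finset.mul_sum]
    refine Finset.sum_congr rfl fun j _ => ?_
    calc ((k : ℂ) • (W₁ t * Cᵀ * W₂ t) + W₃ t) i j * (d j * φ t j)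
        = (((k : ℂ) • (W₁ t * Cᵀ * W₂ t) + W₃ t) i j * d j) * φ t j := by ring
      _ = (d i * (((k : ℂ) • (W₁ t * C * W₂ t) + W₃ t) i j)) * φ t j := by rw [key]
      _ = d i * ((((k : ℂ) • (W₁ t * C * W₂ t) + W₃ t)) i j * φ t j) := by ring
  refine ⟨fun t i => d i * φ t i, fun t i => d i * φ' t i, ?_, ?_, ?_, ?_⟩
  · intro i t
    exact (hφ i t).const_mul (d i)
  · intro i t
    have := (hφ' i t).const_mul (d i)
    have heq : -((((k : ℂ) • (W₁ t * Cᵀ * W₂ t) + W₃ t)) *ᵥ (fun j => d j * φ t j)) i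
        = d i * (-((((k : ℂ) • (W₁ t * C * W₂ t) + W₃ t)) *ᵥ φ t) i) := by
      simp only [Pi.neg_apply, keyVec]; ring
    exact heq ▸ this
  · intro hall
    apply hne
    intro t
    funext i
    have := congrFun (hall t) i
    simp only [Pi.zero_apply] at this ⊢
    rcases mul_eq_zero.mp this with h | h
    · exact absurd h (hd i)
    · exact h
  · intro t
    funext i
    have := congrFun (hper t) i
    simp only [Pi.smul_apply, smul_eq_mul] at this ⊢
    rw [this]; ring

/-- **Reciprocity is preserved for at most two resonators.** With `C` Hermitian `2×2` and
diagonal `T`-periodic modulations `W₁, W₂, W₃`, the Hill systems with matrices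
`M(t) = k W₁(t) C W₂(t) + W₃(t)` and `N(t) = k W₁(t) Cᵀ W₂(t) + W₃(t)` have the same
quasifrequencies. -/
theorem reciprocity_two_resonators
    (T : ℝ) (hT : 0 < T) (k : ℝ)
    (C : Matrix (Fin 2) (Fin 2) ℂ) (hC : C.IsHermitian)
    (W₁ W₂ W₃ : ℝ → Matrix (Fin 2) (Fin 2) ℂ)
    (hW₁_per : ∀ t : ℝ, W₁ (t + T) = W₁ t)
    (hW₂_per : ∀ t : ℝ, W₂ (t + T) = W₂ t)
    (hW₃_per : ∀ t : ℝ, W₃ (t + T) = W₃ t)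
    (hW₁_cont : Continuous W₁) (hW₂_cont : Continuous W₂) (hW₃_cont : Continuous W₃)
    (hW₁_diag : ∀ t : ℝ, (W₁ t).IsDiag)
    (hW₂_diag : ∀ t : ℝ, (W₂ t).IsDiag)
    (hW₃_diag : ∀ t : ℝ, (W₃ t).IsDiag) :
    ∀ ν : ℂ,
      IsQuasifrequency T (fun t => (k : ℂ) • (W₁ t * C * W₂ t) + W₃ t) ν ↔
      IsQuasifrequency T (fun t => (k : ℂ) • (W₁ t * Cᵀ * W₂ t) + W₃ t) ν := by
  have hconj : ∀ i j, C j i = star (C i j) := fun i j => (hC.apply j i).symm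
  obtain ⟨d, hd, hCd⟩ : ∃ d : Fin 2 → ℂ, (∀ i, d i ≠ 0) ∧ ∀ i j, C j i * d j = d i * C i j := by
    by_cases h01 : C 0 1 = 0
    · have h10 : C 1 0 = 0 := by rw [hconj 0 1, h01]; simp
      refine ⟨fun _ => 1, fun _ => one_ne_zero, fun i j => ?_⟩
      fin_cases i <;> fin_cases j <;> simp [h01, h10]
    · have h10 : C 1 0 ≠ 0 := by
        rw [hconj 0 1]
        simpa using h01
      refine ⟨![1, C 0 1 / C 1 0], ?_, ?_⟩
      · intro i
        fin_cases i
        · exact one_ne_zero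
        · simpa using div_ne_zero h01 h10
      · intro i j
        fin_cases i <;> fin_cases j <;>
          simp only [Fin.zero_eta, Fin.mk_one, Matrix.cons_val_zero, Matrix.cons_val_one, Matrix.head_cons] <;>
          field_simp <;> ring
  intro ν
  constructor
  · exact quasi_transfer T k C W₁ W₂ W₃ hW₁_diag hW₂_diag hW₃_diag d hd hCd ν
  · intro h
    have hCd' : ∀ i j, Cᵀ j i * (d j)⁻¹ = (d i)⁻¹ * Cᵀ i j := by
      intro i j
      simp only [Matrix.transpose_apply]
      have hdi := hd i
      have hdj := hd j
      field_simp
      linear_combination - hCd i j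
    have := quasi_transfer T k Cᵀ W₁ W₂ W₃ hW₁_diag hW₂_diag hW₃_diag
      (fun i => (d i)⁻¹) (fun i => inv_ne_zero (hd i)) hCd' ν h
    simpa [Matrix.transpose_transpose] using this
end

section
/- Let Ω > 0, let m₁, …, m_N be integers, let A₀, F₀ ∈ ℂ^{N×N} be diagonal matrices with A₀ − F₀ = iΩ·diag(m₁, …, m_N), let F₁ ∈ ℂ^{N×N}, and let (A₁^{(n)})_{n∈ℤ} and (P₁^{(n)})_{n∈ℤ} be families of matrices in ℂ^{N×N}. Fix l, j ∈ {1, …, N} with l ≠ j and (F₀)_{ll} = (F₀)_{jj}, and assume the Fourier-coefficient equation holds at n = m_l: iΩ·m_l·P₁^{(m_l)} − A₀·P₁^{(m_l)} + P₁^{(m_l)}·F₀ = Σ_{k=1}^{N} A₁^{(m_l − m_k)}·E_{kk} − Σ_{k=1}^{N} [m_l = m_k]·E_{kk}·F₁, where E_{kk} is the matrix unit with 1 in position (k,k) and 0 elsewhere, and [m_l = m_k] is 1 if m_l = m_k and 0 otherwise. Then the entry (F₁)_{lj} equals (A₁^{(m_l − m_j)})_{lj}. -/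
open Matrix

/-!
Read off the `(l, j)` entry of the Fourier-coefficient equation. Since `A₀` and `F₀` are diagonal,
the left side is `(iΩ m_l − (A₀)_{ll} + (F₀)_{jj}) (P₁^{(m_l)})_{lj}`, and the folding relation
`(A₀)_{ll} − (F₀)_{ll} = iΩ m_l` together with the degeneracy `(F₀)_{ll} = (F₀)_{jj}` makes the
prefactor vanish. On the right, the matrix units pick out `(A₁^{(m_l − m_j)})_{lj} − (F₁)_{lj}`.
-/

namespace Matrix

variable {ι R : Type*} [Fintype ι] [DecidableEq ι]

theorem IsDiag.mul_apply_left [NonUnitalNonAssocSemiring R] {D : Matrix ι ι R} (hD : D.IsDiag)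
    (M : Matrix ι ι R) (i j : ι) : (D * M) i j = D i i * M i j := by
  conv_lhs => rw [← hD.diagonal_diag, diagonal_mul, diag_apply]

theorem IsDiag.mul_apply_right [NonUnitalNonAssocSemiring R] {D : Matrix ι ι R} (hD : D.IsDiag)
    (M : Matrix ι ι R) (i j : ι) : (M * D) i j = M i j * D j j := by
  conv_lhs => rw [← hD.diagonal_diag, mul_diagonal, diag_apply]

theorem sum_mul_single_self_apply [NonAssocSemiring R] (B : ι → Matrix ι ι R) (i j : ι) :
    (∑ k, B k * single k k 1 : Matrix ι ι R) i j = B j i j := by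
  rw [sum_apply, Finset.sum_eq_single j (fun k _ hk => mul_single_apply_of_ne _ _ _ _ _ hk.symm _)
    (by simp), mul_single_apply_same, mul_one]

theorem sum_smul_single_self_mul_apply [NonAssocSemiring R] (c : ι → R) (F : Matrix ι ι R)
    (i j : ι) : (∑ k, c k • (single k k 1 * F) : Matrix ι ι R) i j = c i * F i j := by
  rw [sum_apply, Finset.sum_eq_single i
    (fun k _ hk => by rw [smul_apply, single_mul_apply_of_ne _ _ _ _ _ hk.symm, smul_zero])
    (by simp), smul_apply, single_mul_apply_same, one_mul, smul_eq_mul]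

end Matrix

theorem first_order_floquet_offdiagonal_general {N : ℕ}
    (Ω : ℝ)
    (m : Fin N → ℤ)
    (A₀ F₀ : Matrix (Fin N) (Fin N) ℂ)
    (hA₀ : A₀.IsDiag) (hF₀ : F₀.IsDiag)
    (hfold : A₀ - F₀ = (Complex.I * (Ω : ℂ)) • Matrix.diagonal (fun k => (m k : ℂ)))
    (F₁ : Matrix (Fin N) (Fin N) ℂ)
    (A₁ P₁ : ℤ → Matrix (Fin N) (Fin N) ℂ)
    (l j : Fin N) (hdeg : F₀ l l = F₀ j j)
    (heq : (Complex.I * (Ω : ℂ) * (m l : ℂ)) • P₁ (m l) - A₀ * P₁ (m l) + P₁ (m l) * F₀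
      = (∑ k : Fin N, A₁ (m l - m k) * Matrix.single k k 1)
        - ∑ k : Fin N, (if m l = m k then (1 : ℂ) else 0) •
            (Matrix.single k k 1 * F₁)) :
    F₁ l j = A₁ (m l - m j) l j := by
  have hprefactor : A₀ l l - F₀ j j = Complex.I * Ω * m l := by
    simpa [hdeg] using congrFun (congrFun hfold l) l
  have hentry := congrFun (congrFun heq l) j
  rw [Matrix.sub_apply, Matrix.add_apply, Matrix.sub_apply, Matrix.smul_apply, smul_eq_mul,
    hA₀.mul_apply_left, hF₀.mul_apply_right, sum_mul_single_self_apply, sum_smul_single_self_mul_apply, if_pos rfl, one_mul] at hentry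
  linear_combination hentry + P₁ (m l) l j * hprefactor

/-- **Off-diagonal entries of the first-order Floquet correction at a degeneracy.** If
`(F₀)_{ll} = (F₀)_{jj}` for `l ≠ j`, then the Fourier coefficient equation at `n = m_l`
yields `(F₁)_{lj} = (A₁^{(m_l − m_j)})_{lj}`. -/
theorem first_order_floquet_offdiagonal {N : ℕ}
    (Ω : ℝ) (hΩ : 0 < Ω)
    (m : Fin N → ℤ)
    (A₀ F₀ : Matrix (Fin N) (Fin N) ℂ)
    (hA₀ : A₀.IsDiag) (hF₀ : F₀.IsDiag)
    (hfold : A₀ - F₀ = (Complex.I * (Ω : ℂ)) • Matrix.diagonal (fun k => (m k : ℂ)))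
    (F₁ : Matrix (Fin N) (Fin N) ℂ)
    (A₁ P₁ : ℤ → Matrix (Fin N) (Fin N) ℂ)
    (l j : Fin N) (hlj : l ≠ j) (hdeg : F₀ l l = F₀ j j)
    (heq : (Complex.I * (Ω : ℂ) * (m l : ℂ)) • P₁ (m l) - A₀ * P₁ (m l) + P₁ (m l) * F₀
      = (∑ k : Fin N, A₁ (m l - m k) * Matrix.single k k 1)
        - ∑ k : Fin N, (if m l = m k then (1 : ℂ) else 0) •
            (Matrix.single k k 1 * F₁)) :
    F₁ l j = A₁ (m l - m j) l j :=
  first_order_floquet_offdiagonal_general Ω m A₀ F₀ hA₀ hF₀ hfold F₁ A₁ P₁ l j hdeg heq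
end

section
/- Let Ω > 0, let m₁, …, m_N be integers, let A₀, F₀ ∈ ℂ^{N×N} be diagonal matrices with A₀ − F₀ = iΩ·diag(m₁, …, m_N), let F₁ ∈ ℂ^{N×N}, and let (A₁^{(n)})_{n∈ℤ} and (P₁^{(n)})_{n∈ℤ} be families of matrices in ℂ^{N×N}. Let 1 ≤ r ≤ N and f₀ ∈ ℂ, and suppose (F₀)_{ll} = f₀ for all l ∈ {1, …, r} (a degenerate point of multiplicity r). Assume that for every l ∈ {1, …, r} the Fourier-coefficient equation holds at n = m_l: iΩ·m_l·P₁^{(m_l)} − A₀·P₁^{(m_l)} + P₁^{(m_l)}·F₀ = Σ_{k=1}^{N} A₁^{(m_l − m_k)}·E_{kk} − Σ_{k=1}^{N} [m_l = m_k]·E_{kk}·F₁. Then the entries of the upper-left r×r block of F₁ are given by (F₁)_{lk} = (A₁^{(m_l − m_k)})_{lk} for all l, k ∈ {1, …, r}. -/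
open Matrix

/-! The folding relation turns `iΩm_l − (A₀)_{ll}` into `−(F₀)_{ll}`, so the `(l, k)` entry of the
left-hand side of the Fourier coefficient equation at `n = m_l` is
`((F₀)_{kk} − (F₀)_{ll}) (P₁^{(m_l)})_{lk}`, which vanishes when `l` and `k` both lie in the
degenerate block. The `(l, k)` entry of the right-hand side is
`(A₁^{(m_l − m_k)})_{lk} − (F₁)_{lk}`, and equating the two gives the block. -/

namespace Matrix

variable {n R : Type*} [Fintype n] [DecidableEq n]

theorem sum_mul_single_self_one_apply [NonAssocSemiring R] (B : n → Matrix n n R) (i j : n) :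
    (∑ k, B k * single k k 1 : Matrix n n R) i j = B j i j := by
  rw [sum_apply, Finset.sum_eq_single j]
  · rw [mul_single_apply_same, mul_one]
  · exact fun k _ hkj => mul_single_apply_of_ne 1 k k i j (Ne.symm hkj) (B k)
  · exact fun h => absurd (Finset.mem_univ j) h

theorem sum_smul_single_self_one_mul_apply [NonAssocSemiring R] (c : n → R) (F : Matrix n n R)
    (i j : n) : (∑ k, c k • (single k k 1 * F) : Matrix n n R) i j = c i * F i j := by
  rw [sum_apply, Finset.sum_eq_single i]
  · rw [smul_apply, single_mul_apply_same, one_mul, smul_eq_mul]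
  · intro k _ hki
    rw [smul_apply, single_mul_apply_of_ne 1 k k i j (Ne.symm hki), smul_zero]
  · exact fun h => absurd (Finset.mem_univ i) h

theorem IsDiag.smul_sub_mul_add_mul_apply [CommRing R] {A F : Matrix n n R} (hA : A.IsDiag)
    (hF : F.IsDiag) (P : Matrix n n R) {i : n} {c : R} (hc : A i i - F i i = c) (j : n) :
    (c • P - A * P + P * F) i j = (F j j - F i i) * P i j := by
  have hAP : (A * P) i j = A i i * P i j := by
    rw [← hA.diagonal_diag, diagonal_mul, diagonal_apply_eq, diag_apply]
  have hPF : (P * F) i j = P i j * F j j := by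
    rw [← hF.diagonal_diag, mul_diagonal, diagonal_apply_eq, diag_apply]
  rw [add_apply, sub_apply, smul_apply, smul_eq_mul, hAP, hPF, ← hc]
  ring

end Matrix

theorem first_order_floquet_degenerate_block_general {N : ℕ}
    (Ω : ℝ)
    (m : Fin N → ℤ)
    (A₀ F₀ : Matrix (Fin N) (Fin N) ℂ)
    (hA₀ : A₀.IsDiag) (hF₀ : F₀.IsDiag)
    (hfold : A₀ - F₀ = (Complex.I * (Ω : ℂ)) • Matrix.diagonal (fun k => (m k : ℂ)))
    (F₁ : Matrix (Fin N) (Fin N) ℂ)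
    (A₁ P₁ : ℤ → Matrix (Fin N) (Fin N) ℂ)
    (r : ℕ) (f₀ : ℂ)
    (hdeg : ∀ l : Fin N, (l : ℕ) < r → F₀ l l = f₀)
    (heq : ∀ l : Fin N, (l : ℕ) < r →
      (Complex.I * (Ω : ℂ) * (m l : ℂ)) • P₁ (m l) - A₀ * P₁ (m l) + P₁ (m l) * F₀
        = (∑ k : Fin N, A₁ (m l - m k) * Matrix.single k k 1)
          - ∑ k : Fin N, (if m l = m k then (1 : ℂ) else 0) •
              (Matrix.single k k 1 * F₁)) :
    ∀ l k : Fin N, (l : ℕ) < r → (k : ℕ) < r → F₁ l k = A₁ (m l - m k) l k := by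
  intro l k hl hk
  have hfold_ll : A₀ l l - F₀ l l = Complex.I * Ω * m l := by
    simpa using congrFun (congrFun hfold l) l
  have hentry := congrFun (congrFun (heq l hl) l) k
  rw [hA₀.smul_sub_mul_add_mul_apply hF₀ _ hfold_ll, hdeg k hk, hdeg l hl, Matrix.sub_apply,
    sum_mul_single_self_one_apply, sum_smul_single_self_one_mul_apply, if_pos rfl, one_mul,
    sub_self, zero_mul] at hentry
  exact (sub_eq_zero.mp hentry.symm).symm

/-- **The degenerate block of the first-order Floquet correction.** At a degenerate point
`f₀` of multiplicity `r` (occupying the first `r` diagonal entries of `F₀`), the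
Fourier coefficient equations at `n = m_l`, `l = 1, …, r`, determine the upper-left
`r × r` block of `F₁`: `(F₁)_{lk} = (A₁^{(m_l − m_k)})_{lk}` for `l, k ∈ {1, …, r}`. -/
theorem first_order_floquet_degenerate_block {N : ℕ}
    (Ω : ℝ) (hΩ : 0 < Ω)
    (m : Fin N → ℤ)
    (A₀ F₀ : Matrix (Fin N) (Fin N) ℂ)
    (hA₀ : A₀.IsDiag) (hF₀ : F₀.IsDiag)
    (hfold : A₀ - F₀ = (Complex.I * (Ω : ℂ)) • Matrix.diagonal (fun k => (m k : ℂ)))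
    (F₁ : Matrix (Fin N) (Fin N) ℂ)
    (A₁ P₁ : ℤ → Matrix (Fin N) (Fin N) ℂ)
    (r : ℕ) (hr1 : 1 ≤ r) (hrN : r ≤ N) (f₀ : ℂ)
    (hdeg : ∀ l : Fin N, (l : ℕ) < r → F₀ l l = f₀)
    (heq : ∀ l : Fin N, (l : ℕ) < r →
      (Complex.I * (Ω : ℂ) * (m l : ℂ)) • P₁ (m l) - A₀ * P₁ (m l) + P₁ (m l) * F₀
        = (∑ k : Fin N, A₁ (m l - m k) * Matrix.single k k 1)
          - ∑ k : Fin N, (if m l = m k then (1 : ℂ) else 0) •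
              (Matrix.single k k 1 * F₁)) :
    ∀ l k : Fin N, (l : ℕ) < r → (k : ℕ) < r → F₁ l k = A₁ (m l - m k) l k :=
  first_order_floquet_degenerate_block_general Ω m A₀ F₀ hA₀ hF₀ hfold F₁ A₁ P₁ r f₀ hdeg heq
end
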